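/- Let f₀, f₁ : ℝ → ℝ and g₁ : ℝ → ℝ be smooth with g₁'(t) = f₁(t) and g₁ nowhere zero, and set f(x,t) = f₁(t)·x + f₀(t). Let p, q, r : ℝ² → ℝ be smooth functions satisfying the inhomogeneous nonlinear Schrödinger system q_t = (fq)_{xx} + 2qr, p_t = -(fp)_{xx} - 2pr, r_x = f(pq)_x + 2f_x pq. Define A = [[-1/(2g₁), q],[-p, 1/(2g₁)]] and B = [[r + f/(2g₁²), (fq)_x - fq/g₁],[(fp)_x + fp/g₁, -r - f/(2g₁²)]]. Then (A,B) is a zero-curvature representation: ∂_t A - ∂_x B + A·B - B·A = 0 at every point. (The integration constant of g₁ serves as the spectral parameter.) -/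

import Mathlib

/-- Partial derivative with respect to the first coordinate `x`. -/
noncomputable def px (f : ℝ × ℝ → ℝ) : ℝ × ℝ → ℝ :=
  fun z => fderiv ℝ f z (1, 0)

/-- Partial derivative with respect to the second coordinate `t`. -/
noncomputable def pt (f : ℝ × ℝ → ℝ) : ℝ × ℝ → ℝ :=
  fun z => fderiv ℝ f z (0, 1)

/-- Entrywise partial `x`-derivative of a matrix-valued function. -/
noncomputable def Mpx (A : ℝ × ℝ → Matrix (Fin 2) (Fin 2) ℝ) :
    ℝ × ℝ → Matrix (Fin 2) (Fin 2) ℝ :=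
  fun z => Matrix.of fun i j => px (fun w => A w i j) z

/-- Entrywise partial `t`-derivative of a matrix-valued function. -/
noncomputable def Mpt (A : ℝ × ℝ → Matrix (Fin 2) (Fin 2) ℝ) :
    ℝ × ℝ → Matrix (Fin 2) (Fin 2) ℝ :=
  fun z => Matrix.of fun i j => pt (fun w => A w i j) z

section aux
variable {F G : ℝ × ℝ → ℝ} {z : ℝ × ℝ}

lemma px_add (hF : DifferentiableAt ℝ F z) (hG : DifferentiableAt ℝ G z) :
    px (fun w => F w + G w) z = px F z + px G z := by
  simp [px, fderiv_fun_add hF hG]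

lemma px_sub (hF : DifferentiableAt ℝ F z) (hG : DifferentiableAt ℝ G z) :
    px (fun w => F w - G w) z = px F z - px G z := by
  simp [px, fderiv_fun_sub hF hG]

lemma px_mul (hF : DifferentiableAt ℝ F z) (hG : DifferentiableAt ℝ G z) :
    px (fun w => F w * G w) z = px F z * G z + F z * px G z := by
  simp [px, fderiv_fun_mul hF hG]; ring

lemma pt_neg : pt (fun w => -F w) z = -(pt F z) := by
  simp [pt, fderiv_neg]

lemma fderiv_comp_snd (u : ℝ → ℝ) (hu : DifferentiableAt ℝ u z.2) (v : ℝ × ℝ) :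
    fderiv ℝ (fun w : ℝ × ℝ => u w.2) z v = v.2 * deriv u z.2 := by
  have h : HasFDerivAt (fun w : ℝ × ℝ => u w.2)
      ((ContinuousLinearMap.smulRight (1 : ℝ →L[ℝ] ℝ) (deriv u z.2)).comp
        (ContinuousLinearMap.snd ℝ ℝ ℝ)) z :=
    HasFDerivAt.comp z hu.hasDerivAt.hasFDerivAt hasFDerivAt_snd
  rw [h.fderiv]
  simp

lemma px_snd (u : ℝ → ℝ) (hu : DifferentiableAt ℝ u z.2) :
    px (fun w : ℝ × ℝ => u w.2) z = 0 := by
  simp [px, fderiv_comp_snd u hu]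

lemma pt_snd (u : ℝ → ℝ) (hu : DifferentiableAt ℝ u z.2) :
    pt (fun w : ℝ × ℝ => u w.2) z = deriv u z.2 := by
  simp [pt, fderiv_comp_snd u hu]

lemma px_fst : px (fun w : ℝ × ℝ => w.1) z = 1 := by
  simp [px, fderiv_fst]

lemma contDiff_px (hF : ContDiff ℝ (⊤ : ℕ∞) F) : ContDiff ℝ (⊤ : ℕ∞) (px F) :=
  (hF.fderiv_right (by simp)).clm_apply contDiff_const

end aux


set_option maxHeartbeats 2000000 in
/-- For `f = f₁(t)·x + f₀(t)` linear in `x`, `g₁` an antiderivative of `f₁` that is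
nowhere zero, and `(p, q, r)` a solution of the inhomogeneous nonlinear Schrödinger
system, the pair `(A, B)` below is a zero-curvature representation (the integration
constant of `g₁` serves as the spectral parameter). -/
theorem nhnls_parametric_zcr (f₀ f₁ g₁ : ℝ → ℝ)
    (hf₀ : ContDiff ℝ (⊤ : ℕ∞) f₀) (hf₁ : ContDiff ℝ (⊤ : ℕ∞) f₁) (hg₁ : ContDiff ℝ (⊤ : ℕ∞) g₁)
    (hg' : ∀ t, deriv g₁ t = f₁ t) (hgne : ∀ t, g₁ t ≠ 0)
    (f : ℝ × ℝ → ℝ) (hf : f = fun z => f₁ z.2 * z.1 + f₀ z.2)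
    (p q r : ℝ × ℝ → ℝ)
    (hp : ContDiff ℝ (⊤ : ℕ∞) p) (hq : ContDiff ℝ (⊤ : ℕ∞) q) (hr : ContDiff ℝ (⊤ : ℕ∞) r)
    (heq1 : ∀ z, pt q z = px (px (fun w => f w * q w)) z + 2 * q z * r z)
    (heq2 : ∀ z, pt p z = -(px (px (fun w => f w * p w)) z) - 2 * p z * r z)
    (heq3 : ∀ z, px r z = f z * px (fun w => p w * q w) z + 2 * px f z * (p z * q z))
    (A B : ℝ × ℝ → Matrix (Fin 2) (Fin 2) ℝ)
    (hA : A = fun z => !![-1 / (2 * g₁ z.2), q z; -p z, 1 / (2 * g₁ z.2)])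
    (hB : B = fun z => !![r z + f z / (2 * (g₁ z.2) ^ 2),
                          px (fun w => f w * q w) z - f z * q z / g₁ z.2;
                          px (fun w => f w * p w) z + f z * p z / g₁ z.2,
                          -(r z) - f z / (2 * (g₁ z.2) ^ 2)]) :
    ∀ z, Mpt A z - Mpx B z + (A z * B z - B z * A z) = 0 := by
  intro z
  have hpd : Differentiable ℝ p := hp.differentiable (by simp)
  have hqd : Differentiable ℝ q := hq.differentiable (by simp)
  have hrd : Differentiable ℝ r := hr.differentiable (by simp)
  have hg₁d : Differentiable ℝ g₁ := hg₁.differentiable (by simp)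
  have hfc : ContDiff ℝ (⊤ : ℕ∞) f := by
    rw [hf]
    exact ((hf₁.comp contDiff_snd).mul contDiff_fst).add (hf₀.comp contDiff_snd)
  have hfd : Differentiable ℝ f := hfc.differentiable (by simp)
  have hd1 : ∀ w : ℝ × ℝ, DifferentiableAt ℝ (fun v : ℝ × ℝ => f₁ v.2) w :=
    fun w => ((hf₁.differentiable (by simp)) w.2).comp w differentiableAt_snd
  have hd0 : ∀ w : ℝ × ℝ, DifferentiableAt ℝ (fun v : ℝ × ℝ => f₀ v.2) w :=
    fun w => ((hf₀.differentiable (by simp)) w.2).comp w differentiableAt_snd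
  have hpxf : ∀ w : ℝ × ℝ, px f w = f₁ w.2 := by
    intro w
    rw [hf]
    rw [px_add ((hd1 w).fun_mul differentiableAt_fst) (hd0 w),
      px_mul (hd1 w) differentiableAt_fst,
      px_snd f₁ ((hf₁.differentiable (by simp)) w.2),
      px_snd f₀ ((hf₀.differentiable (by simp)) w.2), px_fst]
    ring
  have hgdt : ∀ t, HasDerivAt g₁ (f₁ t) t := fun t => hg' t ▸ (hg₁d t).hasDerivAt
  -- derivative of the diagonal entries of A
  have hu1 : ∀ t, HasDerivAt (fun s => -1 / (2 * g₁ s)) (f₁ t / (2 * g₁ t ^ 2)) t := by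
    intro t
    have h := (((hgdt t).const_mul 2).fun_inv (mul_ne_zero two_ne_zero (hgne t))).fun_neg
    have he : (fun s => -(2 * g₁ s)⁻¹) = fun s => -1 / (2 * g₁ s) := by
      funext s; rw [neg_div, one_div]
    rw [he] at h
    refine h.congr_deriv ?_
    have := hgne t
    field_simp
  have hu2 : ∀ t, HasDerivAt (fun s => (g₁ s)⁻¹ * 2⁻¹) (-f₁ t / g₁ t ^ 2 * 2⁻¹) t :=
    fun t => ((hgdt t).inv (hgne t)).mul_const (2⁻¹ : ℝ)
  have h1 : pt (fun w : ℝ × ℝ => -1 / (2 * g₁ w.2)) z = f₁ z.2 / (2 * g₁ z.2 ^ 2) :=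
    (pt_snd (fun s => -1 / (2 * g₁ s)) (hu1 z.2).differentiableAt).trans (hu1 z.2).deriv
  have h2 : pt (fun w : ℝ × ℝ => (g₁ w.2)⁻¹ * 2⁻¹) z = -f₁ z.2 / g₁ z.2 ^ 2 * 2⁻¹ :=
    (pt_snd (fun s => (g₁ s)⁻¹ * 2⁻¹) (hu2 z.2).differentiableAt).trans (hu2 z.2).deriv
  -- t-only factors appearing in B
  have hsd : DifferentiableAt ℝ (fun s => (2 * g₁ s ^ 2)⁻¹) z.2 :=
    (((hg₁d z.2).pow 2).const_mul 2).inv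
      (mul_ne_zero two_ne_zero (pow_ne_zero 2 (hgne z.2)))
  have hsd' : DifferentiableAt ℝ (fun w : ℝ × ℝ => (2 * g₁ w.2 ^ 2)⁻¹) z :=
    hsd.comp z differentiableAt_snd
  have hzs : px (fun w : ℝ × ℝ => (2 * g₁ w.2 ^ 2)⁻¹) z = 0 :=
    px_snd (fun s => (2 * g₁ s ^ 2)⁻¹) hsd
  have hgid : DifferentiableAt ℝ (fun s => (g₁ s)⁻¹) z.2 := (hg₁d z.2).inv (hgne z.2)
  have hgid' : DifferentiableAt ℝ (fun w : ℝ × ℝ => (g₁ w.2)⁻¹) z :=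
    hgid.comp z differentiableAt_snd
  have hzg : px (fun w : ℝ × ℝ => (g₁ w.2)⁻¹) z = 0 :=
    px_snd (fun s => (g₁ s)⁻¹) hgid
  -- products
  have hfq : px (fun w => f w * q w) z = f₁ z.2 * q z + f z * px q z := by
    rw [px_mul (hfd z) (hqd z), hpxf z]
  have hfp : px (fun w => f w * p w) z = f₁ z.2 * p z + f z * px p z := by
    rw [px_mul (hfd z) (hpd z), hpxf z]
  have hr3 : px r z = f z * (px p z * q z + p z * px q z) + 2 * f₁ z.2 * (p z * q z) := by
    have h := heq3 z
    rw [px_mul (hpd z) (hqd z), hpxf z] at h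
    exact h
  have hpxFQd : Differentiable ℝ (px (fun w => f w * q w)) :=
    (contDiff_px (hfc.mul hq)).differentiable (by simp)
  have hpxFPd : Differentiable ℝ (px (fun w => f w * p w)) :=
    (contDiff_px (hfc.mul hp)).differentiable (by simp)
  -- x-derivatives of the entries of B
  have h3 : px (fun w => r w + f w / (2 * g₁ w.2 ^ 2)) z
      = px r z + f₁ z.2 * (2 * g₁ z.2 ^ 2)⁻¹ := by
    have he : (fun w => r w + f w / (2 * g₁ w.2 ^ 2))
        = fun w => r w + f w * (2 * g₁ w.2 ^ 2)⁻¹ := by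
      funext w; rw [div_eq_mul_inv]
    rw [he, px_add (hrd z) ((hfd z).fun_mul hsd'), px_mul (hfd z) hsd', hzs, hpxf z]
    ring
  have h4 : px (fun w => -r w - f w / (2 * g₁ w.2 ^ 2)) z
      = -(px r z) - f₁ z.2 * (2 * g₁ z.2 ^ 2)⁻¹ := by
    have he : (fun w => -r w - f w / (2 * g₁ w.2 ^ 2))
        = fun w => (fun w => -r w) w - f w * (2 * g₁ w.2 ^ 2)⁻¹ := by
      funext w; rw [div_eq_mul_inv]
    rw [he, px_sub ((hrd z).fun_neg) ((hfd z).fun_mul hsd'), px_mul (hfd z) hsd', hzs, hpxf z]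
    have : px (fun w => -r w) z = -(px r z) := by
      simp [px, fderiv_neg]
    rw [this]; ring
  have h5 : px (fun w => px (fun w => f w * q w) w - f w * q w / g₁ w.2) z
      = px (px (fun w => f w * q w)) z
        - (f₁ z.2 * q z + f z * px q z) * (g₁ z.2)⁻¹ := by
    have he : (fun w => px (fun w => f w * q w) w - f w * q w / g₁ w.2)
        = fun w => px (fun w => f w * q w) w - f w * q w * (g₁ w.2)⁻¹ := by
      funext w; rw [div_eq_mul_inv]
    rw [he, px_sub (hpxFQd z) (((hfd z).fun_mul (hqd z)).fun_mul hgid'),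
      px_mul ((hfd z).fun_mul (hqd z)) hgid', hzg, hfq]
    ring
  have h6 : px (fun w => px (fun w => f w * p w) w + f w * p w / g₁ w.2) z
      = px (px (fun w => f w * p w)) z
        + (f₁ z.2 * p z + f z * px p z) * (g₁ z.2)⁻¹ := by
    have he : (fun w => px (fun w => f w * p w) w + f w * p w / g₁ w.2)
        = fun w => px (fun w => f w * p w) w + f w * p w * (g₁ w.2)⁻¹ := by
      funext w; rw [div_eq_mul_inv]
    rw [he, px_add (hpxFPd z) (((hfd z).fun_mul (hpd z)).fun_mul hgid'),
      px_mul ((hfd z).fun_mul (hpd z)) hgid', hzg, hfp]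
    ring
  have hptp : pt (fun w => -p w) z = -(pt p z) := pt_neg
  have hg2 := hgne z.2
  rw [hA, hB]
  ext i j
  fin_cases i <;> fin_cases j <;>
    simp [Mpt, Mpx, Matrix.mul_apply, Fin.sum_univ_two]
  · rw [h1, h3, hfp, hfq, hr3]
    field_simp
    ring
  · rw [heq1 z, h5, hfq]
    field_simp
    ring
  · rw [hptp, heq2 z, h6, hfp]
    field_simp
    ring
  · rw [h2, h4, hfp, hfq, hr3]
    field_simp
    ring
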